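/- Let u, u' ∈ SU(2), written as the matrices with rows (a + ib, −c + id), (c + id, a − ib) and (a' + ib', −c' + id'), (c' + id', a' − ib') respectively, where a² + b² + c² + d² = 1 and a'² + b'² + c'² + d'² = 1. Then there exist θ, θ' ∈ ℝ such that u' = R_θ·u·R_{θ'}, where R_θ is the rotation matrix with rows (cos θ, −sin θ) and (sin θ, cos θ), if and only if a'² − b'² + c'² − d'² = a² − b² + c² − d². In other words, the double cosets of SO(2) in SU(2) are labeled by the quantity a² − b² + c² − d². -/

import Mathlib

/-!
Write `u = A + iB` with `A = !![a, -c; c, a]` (a scaled rotation) and `B = !![b, d; d, -b]`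
(a scaled reflection). Since `R_θ` is real, `R_θ u R_θ'` has real part `R_θ A R_θ'` and
imaginary part `R_θ B R_θ'`: the pair `(a, c)` is rotated by `θ + θ'` and, because a reflection
conjugates `R_θ` to `R_{-θ}`, the pair `(b, d)` is rotated by `θ - θ'`. As `(θ, θ')` ranges over
`ℝ²`, so does `(θ + θ', θ - θ')`, and the plane rotations are transitive on circles about the
origin. Hence `u'` lies in the double coset of `u` iff `a'² + c'² = a² + c²` and
`b'² + d'² = b² + d²`, which on the unit sphere is the single condition
`a'² - b'² + c'² - d'² = a² - b² + c² - d²`.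
-/

/-- The rotation matrix `R_θ`, viewed as a 2×2 complex matrix. -/
noncomputable def rot (θ : ℝ) : Matrix (Fin 2) (Fin 2) ℂ :=
  !![(Real.cos θ : ℂ), -(Real.sin θ : ℂ); (Real.sin θ : ℂ), (Real.cos θ : ℂ)]

open Real

lemma exists_add_sub_iff {K : Type*} [Field K] [NeZero (2 : K)] {P Q : K → Prop} :
    (∃ θ θ' : K, P (θ + θ') ∧ Q (θ - θ')) ↔ (∃ φ, P φ) ∧ ∃ ψ, Q ψ := by
  constructor
  · rintro ⟨θ, θ', hP, hQ⟩
    exact ⟨⟨_, hP⟩, _, hQ⟩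
  · rintro ⟨⟨φ, hP⟩, ψ, hQ⟩
    refine ⟨(φ + ψ) / 2, (φ - ψ) / 2, ?_, ?_⟩
    · convert hP using 1; field_simp; ring
    · convert hQ using 1; field_simp; ring

lemma Complex.exists_eq_exp_mul_I_mul_iff (z z' : ℂ) :
    (∃ φ : ℝ, z' = Complex.exp (φ * Complex.I) * z) ↔ ‖z'‖ = ‖z‖ := by
  constructor
  · rintro ⟨φ, rfl⟩
    simp [Complex.norm_exp_ofReal_mul_I]
  · intro h
    by_cases hz : z = 0
    · exact ⟨0, by simp_all⟩
    refine ⟨z'.arg - z.arg, ?_⟩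
    calc z' = ‖z'‖ * Complex.exp (z'.arg * Complex.I) := (Complex.norm_mul_exp_arg_mul_I z').symm
      _ = Complex.exp (↑(z'.arg - z.arg) * Complex.I) *
            (‖z‖ * Complex.exp (z.arg * Complex.I)) := by
        rw [h, mul_left_comm, ← Complex.exp_add]
        push_cast
        ring_nf
      _ = _ := by rw [Complex.norm_mul_exp_arg_mul_I]

lemma exists_rotation_iff (x y x' y' : ℝ) :
    (∃ φ : ℝ, x' = x * cos φ - y * sin φ ∧ y' = x * sin φ + y * cos φ) ↔
      x' ^ 2 + y' ^ 2 = x ^ 2 + y ^ 2 := by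
  have hrot (φ : ℝ) : x' + y' * Complex.I = Complex.exp (φ * Complex.I) * (x + y * Complex.I) ↔
      x' = x * cos φ - y * sin φ ∧ y' = x * sin φ + y * cos φ := by
    simp only [Complex.ext_iff, Complex.add_re, Complex.add_im, Complex.mul_re, Complex.mul_im,
      Complex.ofReal_re, Complex.ofReal_im, Complex.I_re, Complex.I_im,
      Complex.exp_ofReal_mul_I_re, Complex.exp_ofReal_mul_I_im]
    ring_nf
  simp_rw [← hrot, Complex.exists_eq_exp_mul_I_mul_iff, Complex.norm_add_mul_I]
  exact Real.sqrt_inj (by positivity) (by positivity)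

noncomputable def su2Mat (a b c d : ℝ) : Matrix (Fin 2) (Fin 2) ℂ :=
  !![(a : ℂ) + b * Complex.I, -(c : ℂ) + d * Complex.I;
    (c : ℂ) + d * Complex.I, (a : ℂ) - b * Complex.I]

lemma su2Mat_inj {a b c d a' b' c' d' : ℝ} :
    su2Mat a b c d = su2Mat a' b' c' d' ↔ a = a' ∧ b = b' ∧ c = c' ∧ d = d' := by
  constructor
  · intro h
    simpa [su2Mat, Complex.ext_iff, and_assoc] using
      And.intro (congrFun (congrFun h 0) 0) (congrFun (congrFun h 1) 0)
  · rintro ⟨rfl, rfl, rfl, rfl⟩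
    rfl

lemma rot_mul_su2Mat_mul_rot (θ θ' a b c d : ℝ) :
    rot θ * su2Mat a b c d * rot θ' =
      su2Mat (a * cos (θ + θ') - c * sin (θ + θ')) (b * cos (θ - θ') - d * sin (θ - θ'))
        (a * sin (θ + θ') + c * cos (θ + θ')) (b * sin (θ - θ') + d * cos (θ - θ')) := by
  ext i j
  fin_cases i <;> fin_cases j <;>
    simp [rot, su2Mat, Matrix.mul_apply, Fin.sum_univ_two, cos_add, sin_add, cos_sub, sin_sub] <;>
    ring

lemma su2Mat_eq_rot_mul_su2Mat_mul_rot_iff (θ θ' a b c d a' b' c' d' : ℝ) :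
    su2Mat a' b' c' d' = rot θ * su2Mat a b c d * rot θ' ↔
      (a' = a * cos (θ + θ') - c * sin (θ + θ') ∧ c' = a * sin (θ + θ') + c * cos (θ + θ')) ∧
        (b' = b * cos (θ - θ') - d * sin (θ - θ') ∧ d' = b * sin (θ - θ') + d * cos (θ - θ')) := by
  rw [rot_mul_su2Mat_mul_rot, su2Mat_inj]
  tauto

theorem double_cosets_SO2_SU2_SO2 (a b c d a' b' c' d' : ℝ)
    (habcd : a ^ 2 + b ^ 2 + c ^ 2 + d ^ 2 = 1)
    (habcd' : a' ^ 2 + b' ^ 2 + c' ^ 2 + d' ^ 2 = 1)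
    (u u' : Matrix (Fin 2) (Fin 2) ℂ)
    (hu : u = !![(a : ℂ) + b * Complex.I, -(c : ℂ) + d * Complex.I;
        (c : ℂ) + d * Complex.I, (a : ℂ) - b * Complex.I])
    (hu' : u' = !![(a' : ℂ) + b' * Complex.I, -(c' : ℂ) + d' * Complex.I;
        (c' : ℂ) + d' * Complex.I, (a' : ℂ) - b' * Complex.I]) :
    (∃ θ θ' : ℝ, u' = rot θ * u * rot θ') ↔
      a' ^ 2 - b' ^ 2 + c' ^ 2 - d' ^ 2 = a ^ 2 - b ^ 2 + c ^ 2 - d ^ 2 := by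
  subst hu hu'
  have hcircles : (a' ^ 2 + c' ^ 2 = a ^ 2 + c ^ 2 ∧ b' ^ 2 + d' ^ 2 = b ^ 2 + d ^ 2) ↔
      a' ^ 2 - b' ^ 2 + c' ^ 2 - d' ^ 2 = a ^ 2 - b ^ 2 + c ^ 2 - d ^ 2 :=
    ⟨fun ⟨h₁, h₂⟩ => by linarith, fun h => ⟨by linarith, by linarith⟩⟩
  rw [← hcircles, ← exists_rotation_iff, ← exists_rotation_iff, ← exists_add_sub_iff]
  exact exists₂_congr fun θ θ' => su2Mat_eq_rot_mul_su2Mat_mul_rot_iff θ θ' a b c d a' b' c' d'
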